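/- arXiv:1907.00236 — 4 statements merged into one kernel-verified Lean document; each statement's English description precedes it below -/
import Mathlib

section
/- Unbiasedness of randomized compaction: with the setup of a sorted list x_1 < ... < x_k of even length k, weights w, if the compactor keeps odd or even positions each with probability 1/2, then for every query q the expected rank error is 0 and the variance of the rank error is at most w^2. -/
private lemma pairSum (f : ℕ → ℝ) (n : ℕ) :
    ∑ i ∈ Finset.range (2 * n), f i = ∑ j ∈ Finset.range n, (f (2 * j) + f (2 * j + 1)) := by
  induction n with
  | zero => simp
  | succ n ih =>
    have h2 : 2 * (n + 1) = (2 * n + 1) + 1 := by ring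
    rw [h2, Finset.sum_range_succ, Finset.sum_range_succ, ih, Finset.sum_range_succ]
    ring

/-- Unbiasedness of randomized compaction: for a strictly sorted buffer of even size `k`
with items of weight `2w`, if the compactor keeps odd or even positions each with
probability 1/2, then for every query `q` the expected rank error is `0` and the
variance of the rank error is at most `w²`.  The rank error for coin `b` is
(rank among retained items with weight `2w`) minus (rank among all items with weight `w`). -/
theorem stmt3 (k : ℕ) (hk : Even k) (hk0 : 0 < k) (w : ℝ) (hw : 0 < w)
    (x : Fin k → ℝ) (hmono : StrictMono x) (q : ℝ) :
    let err : Bool → ℝ := fun keepOdd =>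
      (∑ i : Fin k,
          if (if keepOdd then i.val % 2 = 0 else i.val % 2 = 1) ∧ x i < q then 2 * w else 0) -
        (∑ i : Fin k, if x i < q then w else 0)
    (1 / 2 : ℝ) * err true + (1 / 2 : ℝ) * err false = 0 ∧
      (1 / 2 : ℝ) * (err true) ^ 2 + (1 / 2 : ℝ) * (err false) ^ 2 ≤ w ^ 2 := by
  intro err
  obtain ⟨n, hn⟩ := hk
  have hk2 : k = 2 * n := by omega
  set y : ℕ → ℝ := fun i => if h : i < k then x ⟨i, h⟩ else 0 with hy
  have hyx : ∀ i : Fin k, y i.val = x i := by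
    intro i; simp [hy, i.isLt]
  have hymono : ∀ a b : ℕ, a ≤ b → b < k → y a ≤ y b := by
    intro a b hab hb
    have ha : a < k := lt_of_le_of_lt hab hb
    simp only [hy, dif_pos ha, dif_pos hb]
    exact hmono.monotone (by exact hab)
  set t : ℕ → ℝ := fun j =>
    (if y (2 * j) < q then w else 0) - (if y (2 * j + 1) < q then w else 0) with ht
  set T : ℝ := ∑ j ∈ Finset.range n, t j with hT
  -- rewrite err true and err false
  have hpair : ∀ j, j < n → 2 * j + 1 < k := by omega
  have conv : ∀ f : Fin k → ℝ, ∀ g : ℕ → ℝ, (∀ i : Fin k, f i = g i.val) →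
      ∑ i : Fin k, f i = ∑ j ∈ Finset.range n, (g (2 * j) + g (2 * j + 1)) := by
    intro f g hfg
    rw [Finset.sum_congr rfl fun i _ => hfg i, Fin.sum_univ_eq_sum_range g k, hk2, pairSum]
  have h0 : ∀ j : ℕ, (2 * j) % 2 = 0 := fun j => by omega
  have h1 : ∀ j : ℕ, (2 * j + 1) % 2 = 1 := fun j => by omega
  have hA : (∑ i : Fin k, if i.val % 2 = 0 ∧ x i < q then 2 * w else 0)
      = ∑ j ∈ Finset.range n, (if y (2 * j) < q then 2 * w else 0) := by
    rw [conv _ (fun i => if i % 2 = 0 ∧ y i < q then 2 * w else 0)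
      (fun i => by simp only [hyx])]
    refine Finset.sum_congr rfl fun j _ => ?_
    simp [h0 j, h1 j]
  have hB : (∑ i : Fin k, if i.val % 2 = 1 ∧ x i < q then 2 * w else 0)
      = ∑ j ∈ Finset.range n, (if y (2 * j + 1) < q then 2 * w else 0) := by
    rw [conv _ (fun i => if i % 2 = 1 ∧ y i < q then 2 * w else 0)
      (fun i => by simp only [hyx])]
    refine Finset.sum_congr rfl fun j _ => ?_
    simp [h0 j, h1 j]
  have hC : (∑ i : Fin k, if x i < q then w else 0)
      = ∑ j ∈ Finset.range n, ((if y (2 * j) < q then w else 0)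
          + (if y (2 * j + 1) < q then w else 0)) := by
    exact conv _ (fun i => if y i < q then w else 0) (fun i => by simp only [hyx])
  have hErrT : err true = T := by
    show (∑ i : Fin k, if i.val % 2 = 0 ∧ x i < q then 2 * w else 0)
        - (∑ i : Fin k, if x i < q then w else 0) = T
    rw [hA, hC, hT, ← Finset.sum_sub_distrib]
    refine Finset.sum_congr rfl fun j _ => ?_
    simp only [ht]
    split_ifs <;> ring
  have hErrF : err false = -T := by
    show (∑ i : Fin k, if i.val % 2 = 1 ∧ x i < q then 2 * w else 0)
        - (∑ i : Fin k, if x i < q then w else 0) = -T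
    rw [hB, hC, hT, ← Finset.sum_neg_distrib, ← Finset.sum_sub_distrib]
    refine Finset.sum_congr rfl fun j _ => ?_
    simp only [ht]
    split_ifs <;> ring
  -- 0 ≤ T
  have htnonneg : ∀ j ∈ Finset.range n, 0 ≤ t j := by
    intro j hj
    rw [Finset.mem_range] at hj
    have hlt : y (2 * j) ≤ y (2 * j + 1) :=
      hymono _ _ (by omega) (hpair j hj)
    simp only [ht]
    split_ifs with hb ha ha <;> try linarith
  have hT0 : 0 ≤ T := Finset.sum_nonneg htnonneg
  -- T ≤ w
  have htle : ∀ j, t j ≤ w := by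
    intro j
    simp only [ht]
    split_ifs <;> linarith
  have hTw : T ≤ w := by
    by_cases hz : ∀ j ∈ Finset.range n, t j = 0
    · rw [hT, Finset.sum_eq_zero hz]; linarith
    · push_neg at hz
      obtain ⟨j0, hj0, hne⟩ := hz
      rw [Finset.mem_range] at hj0
      have hkey : ∀ j ∈ Finset.range n, j ≠ j0 → t j = 0 := by
        intro j hj hjne
        rw [Finset.mem_range] at hj
        by_contra htj
        -- both t j ≠ 0 and t j0 ≠ 0
        have hinfo : ∀ m, m < n → t m ≠ 0 → y (2 * m) < q ∧ ¬ y (2 * m + 1) < q := by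
          intro m hm hmne
          have hlt : y (2 * m) ≤ y (2 * m + 1) := hymono _ _ (by omega) (hpair m hm)
          simp only [ht] at hmne
          constructor
          · by_contra hc
            have : ¬ y (2 * m + 1) < q := fun hcc => hc (lt_of_le_of_lt hlt hcc)
            simp [hc, this] at hmne
          · intro hc
            have : y (2 * m) < q := lt_of_le_of_lt hlt hc
            simp [hc, this] at hmne
        obtain ⟨hj1, hj2⟩ := hinfo j hj htj
        obtain ⟨hj01, hj02⟩ := hinfo j0 hj0 hne
        rcases lt_or_gt_of_ne hjne with h | h
        · exact hj2 (lt_of_le_of_lt (hymono _ _ (by omega) (by omega)) hj01)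
        · exact hj02 (lt_of_le_of_lt (hymono _ _ (by omega) (by omega)) hj1)
      rw [hT, Finset.sum_eq_single_of_mem j0 (Finset.mem_range.mpr hj0) hkey]
      exact htle j0
  refine ⟨by rw [hErrT, hErrF]; ring, ?_⟩
  rw [hErrT, hErrF]
  have : T ^ 2 ≤ w ^ 2 := pow_le_pow_left₀ hT0 hTw 2
  nlinarith [this]
end

section
/- Bound on compactions per level (corrected): with total processed weight n ≤ k·2^H, compactor size k_h = k·c^{H−h}, and weight w_h = 2^{h−1}, the number of compactions at level h satisfies m_h ≤ n/(k_h·w_h) ≤ 2·(2/c)^{H−h}. -/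
/-- Bound on compactions per level (corrected): with total processed weight
`n ≤ k·2^H`, compactor size `k_h = k·c^(H−h)`, and item weight `w_h = 2^(h−1)`,
the number of compactions at level `h` satisfies
`m_h ≤ n / (k_h·w_h) ≤ 2·(2/c)^(H−h)`. -/
theorem stmt8 (k c n : ℝ) (hk : 4 ≤ k) (hc1 : 1 / 2 < c) (hc2 : c < 1)
    (H h : ℕ) (hh1 : 1 ≤ h) (hhH : h ≤ H) (hn : 0 < n) (hnk : n ≤ k * 2 ^ H)
    (m : ℝ) (hm : m ≤ n / (k * c ^ (H - h) * 2 ^ (h - 1))) :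
    m ≤ 2 * (2 / c) ^ (H - h) := by
  have hc0 : (0:ℝ) < c := by linarith
  have hk0 : (0:ℝ) < k := by linarith
  have hd : (0:ℝ) < k * c ^ (H - h) * 2 ^ (h - 1) := by positivity
  have hH : (H - h) + (h - 1) + 1 = H := by omega
  have key : k * 2 ^ H / (k * c ^ (H - h) * 2 ^ (h - 1)) = 2 * (2 / c) ^ (H - h) := by
    have h2H : (2:ℝ) ^ H = 2 ^ (H - h) * 2 ^ (h - 1) * 2 := by
      rw [← pow_add, ← pow_succ, hH]
    rw [h2H, div_pow]
    field_simp
  calc m ≤ n / (k * c ^ (H - h) * 2 ^ (h - 1)) := hm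
    _ ≤ k * 2 ^ H / (k * c ^ (H - h) * 2 ^ (h - 1)) := by gcongr
    _ = 2 * (2 / c) ^ (H - h) := key
end

section
/- Weighted pair compression is unbiased: let a < b be reals with weights w_a, w_b > 0. Choose x = a with probability w_a/(w_a + w_b) and x = b with probability w_b/(w_a + w_b), assigning x weight w_a + w_b. For a query q, define the error E(q) = (w_a + w_b)·[q > x] − (w_a·[q > a] + w_b·[q > b]). Then E[E(q)] = 0 for every q; E(q) = 0 almost surely if q < a or q > b; and if a < q < b then E(q) = w_b with probability w_a/(w_a+w_b) and E(q) = −w_a with probability w_b/(w_a+w_b). -/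
/-- Weighted pair compression is unbiased: for `a < b` with weights `w_a, w_b > 0`,
keep `x = a` with probability `w_a/(w_a+w_b)` and `x = b` with probability
`w_b/(w_a+w_b)`, assigning weight `w_a + w_b`.  The error
`E(x) = (w_a+w_b)·[x < q] − (w_a·[a < q] + w_b·[b < q])` has expectation 0 for every
`q`; it is 0 for both outcomes if `q < a` or `q > b`; and if `a < q < b` then
`E(a) = w_b` (kept with probability `w_a/(w_a+w_b)`) and `E(b) = −w_a`. -/
theorem stmt11 (a b wa wb q : ℝ) (hab : a < b) (hwa : 0 < wa) (hwb : 0 < wb) :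
    let err : ℝ → ℝ := fun x =>
      (wa + wb) * (if x < q then 1 else 0) -
        (wa * (if a < q then 1 else 0) + wb * (if b < q then 1 else 0))
    (wa / (wa + wb)) * err a + (wb / (wa + wb)) * err b = 0 ∧
      ((q < a ∨ b < q) → err a = 0 ∧ err b = 0) ∧
      (a < q → q < b → err a = wb ∧ err b = -wa) := by
  intro err
  have hw : wa + wb ≠ 0 := by positivity
  refine ⟨?_, ?_, ?_⟩
  · simp only [err]
    split_ifs <;> field_simp <;> ring
  · rintro (h | h)
    · have h1 : ¬ a < q := not_lt.mpr h.le
      have h2 : ¬ b < q := not_lt.mpr (h.trans hab).le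
      simp [err, h1, h2]
    · have h1 : a < q := hab.trans h
      have h2 : q < q ∨ True := Or.inr trivial
      constructor <;> simp [err, h1, h] <;> ring
  · intro h1 h2
    constructor <;> simp [err, h1, h2.not_gt, not_lt.mpr h2.le] <;> ring
end

section
/- Per-sweep error bound: if during one sweep of a sweep-compactor all compacted pairs have pairwise disjoint open intervals and each pair compression contributes error in {−w, 0, +w} to a query q (nonzero only if q lies in the pair's open interval), then the total error contributed to q by the entire sweep has absolute value at most w, regardless of the number of pairs compacted in the sweep. -/
/-- Per-sweep error bound: if during one sweep all compacted pairs have pairwise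
disjoint open intervals and each pair compression contributes error in `{−w, 0, +w}`
to a query `q` (nonzero only if `q` lies in the pair's open interval), then the total
error contributed to `q` by the entire sweep has absolute value at most `w`,
regardless of the number of pairs compacted. -/
theorem stmt19 (m : ℕ) (w : ℝ) (hw : 0 ≤ w) (q : ℝ) (x y : ℕ → ℝ)
    (hdisj : ∀ i j, i < m → j < m → i ≠ j →
      Disjoint (Set.Ioo (x i) (y i)) (Set.Ioo (x j) (y j)))
    (e : ℕ → ℝ) (he : ∀ i < m, e i = -w ∨ e i = 0 ∨ e i = w)
    (hinner : ∀ i < m, e i ≠ 0 → q ∈ Set.Ioo (x i) (y i)) :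
    |∑ i ∈ Finset.range m, e i| ≤ w := by
  by_cases h : ∃ i ∈ Finset.range m, e i ≠ 0
  · obtain ⟨i₀, hi₀m, hi₀⟩ := h
    rw [Finset.mem_range] at hi₀m
    have hsum : ∑ i ∈ Finset.range m, e i = e i₀ := by
      apply Finset.sum_eq_single_of_mem _ (Finset.mem_range.mpr hi₀m)
      intro j hj hne
      rw [Finset.mem_range] at hj
      by_contra hj0
      exact Set.disjoint_left.mp (hdisj j i₀ hj hi₀m hne)
        (hinner j hj hj0) (hinner i₀ hi₀m hi₀)
    rw [hsum]
    rcases he i₀ hi₀m with h' | h' | h' <;> simp [h', abs_of_nonneg hw, abs_neg, hw]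
  · push_neg at h
    rw [Finset.sum_eq_zero h]
    simpa using hw
end
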